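/- (Climbing-up walks) For every α ∈ (0,1) and every integer ℓ ≥ 3 there exists n₀ ∈ ℕ such that for all n ≥ n₀ the following holds. If H = ([n], E) is a 3-graph with d(i,j) ≥ min(i, j, n/2) + αn for all pairs {i,j} of distinct vertices, then for every ordered pair (x,y) of distinct vertices the number of tight walks x₁ = x, x₂ = y, x₃, …, x_ℓ in H such that x_i ≥ min(αn(i−2)/4, n/2) + αn/4 for every 3 ≤ i ≤ ℓ is at least (α/5)^{ℓ−2}·n^{ℓ−2}. -/

import Mathlib

/-- `E` is the edge set of a 3-uniform hypergraph on vertex set `[n] = {1, …, n}`. -/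
def IsThreeGraph (n : ℕ) (E : Finset (Finset ℕ)) : Prop :=
  ∀ e ∈ E, e.card = 3 ∧ e ⊆ Finset.Icc 1 n

/-- The pair degree `d(i,j)`: the number of vertices `x` with `{i,j,x} ∈ E`. -/
def pairDeg (n : ℕ) (E : Finset (Finset ℕ)) (i j : ℕ) : ℕ :=
  ((Finset.Icc 1 n).filter fun x => ({i, j, x} : Finset ℕ) ∈ E).card

/-- The degree condition `d(i,j) ≥ min(i, j, n/2) + αn` for all distinct `i, j ∈ [n]`. -/
def DegCond (n : ℕ) (E : Finset (Finset ℕ)) (α : ℝ) : Prop :=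
  ∀ i ∈ Finset.Icc 1 n, ∀ j ∈ Finset.Icc 1 n, i ≠ j →
    min (min (i : ℝ) (j : ℝ)) ((n : ℝ) / 2) + α * n ≤ (pairDeg n E i j : ℝ)

/-- `f` lists the `k` vertices of a tight walk in `([n], E)`: a sequence of (not
necessarily distinct) vertices of `[n]` such that any three consecutive vertices
are pairwise distinct and form an edge. -/
def IsTightWalkOn (n : ℕ) (E : Finset (Finset ℕ)) (k : ℕ) (f : Fin k → ℕ) : Prop :=
  (∀ i, f i ∈ Finset.Icc 1 n) ∧
  ∀ i : ℕ, ∀ h : i + 2 < k,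
    (f ⟨i, by omega⟩ ≠ f ⟨i + 1, by omega⟩ ∧ f ⟨i, by omega⟩ ≠ f ⟨i + 2, h⟩ ∧
      f ⟨i + 1, by omega⟩ ≠ f ⟨i + 2, h⟩) ∧
    ({f ⟨i, by omega⟩, f ⟨i + 1, by omega⟩, f ⟨i + 2, h⟩} : Finset ℕ) ∈ E

/-!
Admissible walks are built one vertex at a time. If the last two vertices `a, b` of an
admissible walk meet their thresholds, then `min(a, b, n/2)` is at least the threshold two steps
back (capped at `n/2`), which is at most `3αn/4` below the threshold for the next vertex. So the
pair-degree condition `d(a,b) ≥ min(a, b, n/2) + αn` leaves, after discarding `a`, `b` and the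
vertices below the next threshold, at least `αn/4 - 2 ≥ αn/5` admissible next vertices once
`αn ≥ 40`. Double counting along the restriction map `Fin.init` multiplies the number of walks
by `αn/5` at each of the `ℓ - 2` steps.
-/

open Finset

theorem IsTightWalkOn.snoc {n : ℕ} {E : Finset (Finset ℕ)} {k : ℕ} {f : Fin (k + 2) → ℕ}
    (hf : IsTightWalkOn n E (k + 2) f) {c : ℕ} (hc : c ∈ Icc 1 n)
    (hne : f ⟨k, by omega⟩ ≠ f (Fin.last (k + 1)) ∧ f ⟨k, by omega⟩ ≠ c ∧
      f (Fin.last (k + 1)) ≠ c)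
    (hE : {f ⟨k, by omega⟩, f (Fin.last (k + 1)), c} ∈ E) :
    IsTightWalkOn n E (k + 3) (Fin.snoc f c : Fin (k + 3) → ℕ) := by
  have hsnoc (j : ℕ) (hj : j < k + 2) :
      (Fin.snoc f c : Fin (k + 3) → ℕ) ⟨j, by omega⟩ = f ⟨j, hj⟩ :=
    Fin.snoc_castSucc (α := fun _ => ℕ) (i := ⟨j, hj⟩) c f
  refine ⟨fun i => ?_, fun i hi => ?_⟩
  · induction i using Fin.lastCases with
    | last => rwa [Fin.snoc_last]
    | cast j => rw [Fin.snoc_castSucc]; exact hf.1 j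
  · rw [hsnoc i (by omega), hsnoc (i + 1) (by omega)]
    by_cases hik : i < k
    · rw [hsnoc (i + 2) (by omega)]
      exact hf.2 i (by omega)
    · obtain rfl : i = k := by omega
      have hlast : (Fin.snoc f c : Fin (i + 3) → ℕ) ⟨i + 2, hi⟩ = c :=
        Fin.snoc_last (α := fun _ => ℕ) c f
      rw [hlast]
      exact ⟨hne, hE⟩

namespace ClimbingWalks

noncomputable section

variable {α : ℝ} {n : ℕ}

/-- The lower bound imposed on the vertex at (0-based) position `i ≥ 2` of a walk, i.e. on the
paper's `x_{i+1}`. -/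
def climbThreshold (α : ℝ) (n i : ℕ) : ℝ :=
  min (α * n * ((i : ℝ) - 1) / 4) ((n : ℝ) / 2) + α * n / 4

lemma climbThreshold_mono (hαn : 0 ≤ α * n) : Monotone (climbThreshold α n) := by
  intro i j hij
  have : (i : ℝ) ≤ j := by exact_mod_cast hij
  unfold climbThreshold
  gcongr

lemma climbThreshold_nonneg (hαn : 0 ≤ α * n) {i : ℕ} (hi : 1 ≤ i) :
    0 ≤ climbThreshold α n i := by
  have : (1 : ℝ) ≤ i := by exact_mod_cast hi
  have : 0 ≤ α * n * ((i : ℝ) - 1) / 4 :=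
    div_nonneg (mul_nonneg hαn (by linarith)) (by norm_num)
  unfold climbThreshold
  linarith [le_min this (by positivity : (0 : ℝ) ≤ n / 2)]

lemma climbThreshold_le_of_le_three (hαn : 0 ≤ α * n) {i : ℕ} (hi : i ≤ 3) :
    climbThreshold α n i ≤ 3 * (α * n) / 4 := by
  have : (i : ℝ) ≤ 3 := by exact_mod_cast hi
  unfold climbThreshold
  nlinarith [min_le_left (α * n * ((i : ℝ) - 1) / 4) ((n : ℝ) / 2)]

lemma climbThreshold_add_two_le (hαn : 0 ≤ α * n) (i : ℕ) :
    climbThreshold α n (i + 2) ≤ min (climbThreshold α n i) (n / 2) + 3 * (α * n) / 4 := by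
  unfold climbThreshold
  set A := α * n * ((i : ℝ) - 1) / 4
  have hA : α * n * (((i + 2 : ℕ) : ℝ) - 1) / 4 = A + α * n / 2 := by push_cast; ring
  have hshift : min (A + α * n / 2) (n / 2) ≤ min A (n / 2) + α * n / 2 := by
    rw [← min_add_add_right]
    exact min_le_min_left _ (by linarith)
  have hlift : min A (n / 2) ≤ min (min A (n / 2) + α * n / 4) (n / 2) :=
    le_min (by linarith) (min_le_right _ _)
  rw [hA]
  linarith

lemma climbThreshold_add_two_le_min (hαn : 0 ≤ α * n) {i : ℕ} {a b : ℝ} (ha₀ : 0 ≤ a)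
    (hb₀ : 0 ≤ b) (ha : 2 ≤ i → climbThreshold α n i ≤ a)
    (hb : 2 ≤ i + 1 → climbThreshold α n (i + 1) ≤ b) :
    climbThreshold α n (i + 2) ≤ min (min a b) (n / 2) + 3 * (α * n) / 4 := by
  rcases lt_or_ge i 2 with hi | hi
  · have : 0 ≤ min (min a b) ((n : ℝ) / 2) := le_min (le_min ha₀ hb₀) (by positivity)
    linarith [climbThreshold_le_of_le_three hαn (by omega : i + 2 ≤ 3)]
  · have hb' : climbThreshold α n i ≤ b :=
      (climbThreshold_mono hαn (Nat.le_succ i)).trans (hb (by omega))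
    calc climbThreshold α n (i + 2)
        ≤ min (climbThreshold α n i) (n / 2) + 3 * (α * n) / 4 :=
          climbThreshold_add_two_le hαn i
      _ ≤ min (min a b) (n / 2) + 3 * (α * n) / 4 := by
          gcongr
          exact le_min (ha hi) hb'

section Extensions

variable (n) (E : Finset (Finset ℕ))

def extensions (a b : ℕ) (t : ℝ) : Finset ℕ :=
  {c ∈ Icc 1 n | {a, b, c} ∈ E ∧ c ≠ a ∧ c ≠ b ∧ t ≤ c}

lemma card_filter_cast_lt_le {t : ℝ} (ht : 0 ≤ t) :
    (#{c ∈ Icc 1 n | ((c : ℕ) : ℝ) < t} : ℝ) ≤ t := by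
  have hsub : {c ∈ Icc 1 n | ((c : ℕ) : ℝ) < t} ⊆ Icc 1 ⌊t⌋₊ := by
    intro c hc
    rw [mem_filter, mem_Icc] at hc
    exact mem_Icc.mpr ⟨hc.1.1, Nat.le_floor hc.2.le⟩
  calc (#{c ∈ Icc 1 n | ((c : ℕ) : ℝ) < t} : ℝ) ≤ #(Icc 1 ⌊t⌋₊) := by
        exact_mod_cast card_le_card hsub
    _ = ⌊t⌋₊ := by simp
    _ ≤ t := Nat.floor_le ht

lemma pairDeg_le_card_extensions (a b : ℕ) {t : ℝ} (ht : 0 ≤ t) :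
    (pairDeg n E a b : ℝ) ≤ #(extensions n E a b t) + 2 + t := by
  set low := {c ∈ Icc 1 n | ((c : ℕ) : ℝ) < t}
  have hsub : {c ∈ Icc 1 n | {a, b, c} ∈ E} ⊆ extensions n E a b t ∪ {a, b} ∪ low := by
    intro c hc
    rw [mem_filter] at hc
    by_cases hca : c = a
    · simp [hca]
    by_cases hcb : c = b
    · simp [hcb]
    by_cases hct : t ≤ c
    · exact mem_union_left _ (mem_union_left _ (mem_filter.mpr ⟨hc.1, hc.2, hca, hcb, hct⟩))
    · exact mem_union_right _ (mem_filter.mpr ⟨hc.1, not_le.mp hct⟩)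
  have hcard : pairDeg n E a b ≤ #(extensions n E a b t) + 2 + #low :=
    calc pairDeg n E a b ≤ #(extensions n E a b t ∪ {a, b} ∪ low) := card_le_card hsub
      _ ≤ #(extensions n E a b t ∪ {a, b}) + #low := card_union_le _ _
      _ ≤ #(extensions n E a b t) + #{a, b} + #low := by gcongr; exact card_union_le _ _
      _ ≤ #(extensions n E a b t) + 2 + #low := by gcongr; exact card_le_two
  have hlow : (#low : ℝ) ≤ t := card_filter_cast_lt_le n ht
  have hcard' : (pairDeg n E a b : ℝ) ≤ #(extensions n E a b t) + 2 + #low := by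
    exact_mod_cast hcard
  linarith

end Extensions

section Walks

open Classical in
def climbingWalks (n : ℕ) (E : Finset (Finset ℕ)) (α : ℝ) (x y k : ℕ) :
    Finset (Fin (k + 2) → ℕ) :=
  {f ∈ Fintype.piFinset fun _ => Icc 1 n | IsTightWalkOn n E (k + 2) f ∧ f 0 = x ∧ f 1 = y ∧
    ∀ i : Fin (k + 2), 2 ≤ (i : ℕ) → climbThreshold α n i ≤ f i}

def nextVertices (n : ℕ) (E : Finset (Finset ℕ)) (α : ℝ) {k : ℕ} (f : Fin (k + 2) → ℕ) :
    Finset ℕ :=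
  extensions n E (f ⟨k, by omega⟩) (f (Fin.last (k + 1))) (climbThreshold α n (k + 2))

variable {E : Finset (Finset ℕ)} {x y k : ℕ}

lemma mem_climbingWalks {f : Fin (k + 2) → ℕ} :
    f ∈ climbingWalks n E α x y k ↔ IsTightWalkOn n E (k + 2) f ∧ f 0 = x ∧ f 1 = y ∧
      ∀ i : Fin (k + 2), 2 ≤ (i : ℕ) → climbThreshold α n i ≤ f i := by
  simp only [climbingWalks, mem_filter, Fintype.mem_piFinset]
  exact and_iff_right_of_imp fun h => h.1.1

lemma penultimate_ne_last_of_mem_climbingWalks (hxy : x ≠ y) {f : Fin (k + 2) → ℕ}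
    (hf : f ∈ climbingWalks n E α x y k) : f ⟨k, by omega⟩ ≠ f (Fin.last (k + 1)) := by
  obtain ⟨hwalk, hx, hy, -⟩ := mem_climbingWalks.mp hf
  cases k with
  | zero => exact hx ▸ hy ▸ hxy
  | succ j => exact (hwalk.2 j (by omega)).1.2.2

lemma snoc_mem_climbingWalks (hxy : x ≠ y) {f : Fin (k + 2) → ℕ}
    (hf : f ∈ climbingWalks n E α x y k) {c : ℕ}
    (hc : c ∈ nextVertices n E α f) :
    (Fin.snoc f c : Fin (k + 3) → ℕ) ∈ climbingWalks n E α x y (k + 1) := by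
  obtain ⟨hwalk, hx, hy, hthr⟩ := mem_climbingWalks.mp hf
  obtain ⟨hcI, hcE, hca, hcb, hct⟩ := mem_filter.mp hc
  refine mem_climbingWalks.mpr ⟨hwalk.snoc hcI ⟨penultimate_ne_last_of_mem_climbingWalks hxy hf,
    Ne.symm hca, Ne.symm hcb⟩ hcE, ?_, ?_, fun i hi => ?_⟩
  · rwa [Fin.snoc_apply_zero]
  · exact (Fin.snoc_castSucc (α := fun _ => ℕ) (i := 1) c f).trans hy
  · induction i using Fin.lastCases with
    | last => rwa [Fin.snoc_last]
    | cast j => rw [Fin.snoc_castSucc]; exact hthr j hi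

lemma le_card_nextVertices (hαn : 40 ≤ α * n) (hdeg : DegCond n E α) (hxy : x ≠ y)
    {f : Fin (k + 2) → ℕ} (hf : f ∈ climbingWalks n E α x y k) :
    α * n / 5 ≤ #(nextVertices n E α f) := by
  obtain ⟨hwalk, -, -, hthr⟩ := mem_climbingWalks.mp hf
  have hαn₀ : 0 ≤ α * n := by linarith
  have hthr' := climbThreshold_add_two_le_min hαn₀ (i := k) (Nat.cast_nonneg _)
    (Nat.cast_nonneg _) (hthr ⟨k, by omega⟩) (hthr (Fin.last (k + 1)))
  have hdeg' := hdeg _ (hwalk.1 _) _ (hwalk.1 _) (penultimate_ne_last_of_mem_climbingWalks hxy hf)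
  have hext := pairDeg_le_card_extensions n E (f ⟨k, by omega⟩) (f (Fin.last (k + 1)))
    (climbThreshold_nonneg hαn₀ (by omega : 1 ≤ k + 2))
  unfold nextVertices
  linarith

lemma card_climbingWalks_mul_le (hαn : 40 ≤ α * n) (hdeg : DegCond n E α) (hxy : x ≠ y) :
    #(climbingWalks n E α x y k) * (α * n / 5) ≤ #(climbingWalks n E α x y (k + 1)) := by
  classical
  have key := card_nsmul_le_card_nsmul (R := ℝ) (fun g f => Fin.init f = g)
    (s := climbingWalks n E α x y k) (t := climbingWalks n E α x y (k + 1)) (m := α * n / 5)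
    (n := 1) (fun g hg => ?_) (fun f _ => ?_)
  · simpa [nsmul_eq_mul] using key
  · refine (le_card_nextVertices hαn hdeg hxy hg).trans (Nat.cast_le.mpr ?_)
    refine card_le_card_of_injOn (fun c => (Fin.snoc g c : Fin (k + 3) → ℕ)) (fun c hc => ?_)
      (Fin.snoc_right_injective (α := fun _ => ℕ) g).injOn
    exact (mem_bipartiteAbove _).mpr ⟨snoc_mem_climbingWalks hxy hg hc, Fin.init_snoc _ _⟩
  · refine Nat.cast_le_one.mpr (card_le_one.mpr fun g₁ h₁ g₂ h₂ => ?_)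
    rw [mem_bipartiteBelow] at h₁ h₂
    exact h₁.2.symm.trans h₂.2

lemma pow_le_card_climbingWalks (hαn : 40 ≤ α * n) (hdeg : DegCond n E α)
    (hx : x ∈ Icc 1 n) (hy : y ∈ Icc 1 n) (hxy : x ≠ y) (k : ℕ) :
    (α * n / 5) ^ k ≤ #(climbingWalks n E α x y k) := by
  induction k with
  | zero =>
    have hstart : ![x, y] ∈ climbingWalks n E α x y 0 :=
      mem_climbingWalks.mpr
        ⟨⟨Fin.forall_fin_two.mpr ⟨hx, hy⟩, fun i hi => by omega⟩, rfl, rfl, fun i hi => by omega⟩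
    simpa using card_pos.mpr ⟨_, hstart⟩
  | succ k ih =>
    calc (α * n / 5) ^ (k + 1) = (α * n / 5) ^ k * (α * n / 5) := pow_succ _ _
      _ ≤ #(climbingWalks n E α x y k) * (α * n / 5) := by gcongr
      _ ≤ #(climbingWalks n E α x y (k + 1)) := card_climbingWalks_mul_le hαn hdeg hxy

end Walks

end

end ClimbingWalks

open ClimbingWalks in
/-- **Climbing-up walks.** For `α ∈ (0,1)` and `ℓ ≥ 3` there is `n₀` such that for
`n ≥ n₀`, in any 3-graph `([n], E)` satisfying the degree condition, for any ordered
pair `(x, y)` of distinct vertices the number of tight walks `x₁ = x, x₂ = y, x₃, …,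
x_ℓ` with `x_i ≥ min(αn(i−2)/4, n/2) + αn/4` for all `3 ≤ i ≤ ℓ` is at least
`(α/5)^(ℓ−2) · n^(ℓ−2)`.  (The walk is indexed here by `Fin ℓ`, so the vertex `x_i`
above is `f ⟨i − 1, _⟩`.) -/
theorem stmt_13 (α : ℝ) (hα0 : 0 < α) (ℓ : ℕ) (hℓ : 3 ≤ ℓ) :
    ∃ n₀ : ℕ, ∀ n : ℕ, n₀ ≤ n →
      ∀ E : Finset (Finset ℕ), IsThreeGraph n E → DegCond n E α →
      ∀ x y : ℕ, x ∈ Finset.Icc 1 n → y ∈ Finset.Icc 1 n → x ≠ y →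
        (α / 5) ^ (ℓ - 2) * (n : ℝ) ^ (ℓ - 2) ≤
          (Set.ncard {f : Fin ℓ → ℕ | IsTightWalkOn n E ℓ f ∧
            f ⟨0, by omega⟩ = x ∧ f ⟨1, by omega⟩ = y ∧
            ∀ i : Fin ℓ, 2 ≤ (i : ℕ) →
              min (α * n * ((i : ℕ) - 1 : ℝ) / 4) ((n : ℝ) / 2) + α * n / 4 ≤
                (f i : ℝ)} : ℝ) := by
  refine ⟨⌈40 / α⌉₊, fun n hn E _ hdeg x y hx hy hxy => ?_⟩
  have hαn : 40 ≤ α * n := by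
    have := (Nat.le_ceil (40 / α)).trans (Nat.cast_le.mpr hn : (⌈40 / α⌉₊ : ℝ) ≤ n)
    rwa [div_le_iff₀ hα0, mul_comm] at this
  obtain ⟨k, rfl⟩ : ∃ k, ℓ = k + 2 := ⟨ℓ - 2, by omega⟩
  calc (α / 5) ^ (k + 2 - 2) * (n : ℝ) ^ (k + 2 - 2) = (α * n / 5) ^ k := by
        rw [Nat.add_sub_cancel, ← mul_pow, div_mul_eq_mul_div]
    _ ≤ #(climbingWalks n E α x y k) := pow_le_card_climbingWalks hαn hdeg hx hy hxy k
    _ = _ := by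
        rw [← Set.ncard_coe_finset]
        congr 2
        ext f
        -- `⟨0, _⟩, ⟨1, _⟩ : Fin (k + 2)` are definitionally `0, 1`
        exact mem_climbingWalks
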